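/- Let (σ, ξ) be an equivariant positive hyperbolic complex affine sphere in ℂ³ with Blaschke metric g inducing the pair of opposite complex structures (c₁, c̄₂) with local coordinates z and w̄. Then the Pick tensor decomposes as C = p dz³ + s dw̄³ for local functions p, s; that is, the mixed components C(∂_z̄, ∂_z̄, ∂_w) and C(∂_z̄, ∂_w, ∂_w) vanish. This follows from the trace conditions tr_g K_{∂_z̄} = tr_g K_{∂_w} = 0 for the difference tensor K. -/
import Mathlib

/-- For a positive hyperbolic complex affine sphere with Blaschke
metric `g` (isotropic frame `∂_z̄, ∂_w`, with `g(∂_z̄,∂_w) = ν` nonvanishing),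
the Pick tensor `C(X,Y,Z) = −2g(K_X Y, Z)` is totally symmetric and the
trace-free conditions `tr_g K_X = 0` (i.e. `C(X,∂_z̄,∂_w) + C(X,∂_w,∂_z̄) = 0`)
force the mixed components to vanish: `C(∂_z̄,∂_z̄,∂_w) = 0` and
`C(∂_z̄,∂_w,∂_w) = 0`, so `C = p dz³ + s dw̄³`. -/
theorem stmt_8 {M Γ : Type*}
    (g : Γ → Γ → M → ℂ) (K : Γ → Γ → Γ)
    (C : Γ → Γ → Γ → M → ℂ)
    (ezb ew : Γ)
    (hC : ∀ X Y Z : Γ, C X Y Z = fun x => -2 * g (K X Y) Z x)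
    (hsymm : ∀ X Y Z : Γ, C X Y Z = C Y X Z ∧ C X Y Z = C X Z Y)
    (hν : ∀ x : M, g ezb ew x ≠ 0)
    (htr : ∀ X : Γ, C X ezb ew + C X ew ezb = 0) :
    C ezb ezb ew = 0 ∧ C ezb ew ew = 0 := by
  have key : ∀ X : Γ, C X ezb ew = 0 := by
    intro X
    have h := htr X
    rw [(hsymm X ezb ew).2] at h
    have h2 : C X ew ezb = 0 := by
      funext x
      have hx := congrFun h x
      simp only [Pi.add_apply, Pi.zero_apply] at hx
      have : (2 : ℂ) * C X ew ezb x = 0 := by ring_nf; ring_nf at hx; linear_combination hx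
      exact (mul_eq_zero.mp this).resolve_left two_ne_zero
    rw [(hsymm X ezb ew).2, h2]
  refine ⟨key ezb, ?_⟩
  rw [(hsymm ezb ew ew).1]
  exact key ew
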